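/- Let X ⊂ ℤ be finite with |X| ≥ 2 and let P be a linked pair partition of X. Suppose each F_e : (0,∞) → 𝓛(𝓗_at) (e ∈ E_X) is strongly measurable and there is a constant C_F ≥ 0 with ‖F_e(r)‖ ≤ C_F (r⁻¹ + 1) for all r > 0 and all e ∈ E_X. Assume C₀ < ∞ and C₁ < ∞. Then for every r ≥ 0 the integrand defining the contraction C_P(φ)(r) is Bochner integrable and ‖C_P(φ)(r)‖ ≤ C_F^{|X|−1} · C₁^{|X|−2} · C₀². -/

import Mathlib

open MeasureTheory
open scoped InnerProductSpace

noncomputable section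

/-- Momentum space `ℝ³`. -/
abbrev E3 : Type := EuclideanSpace ℝ (Fin 3)

/-- Junk-valued minimum of a finset of integers. -/
def fmin (s : Finset ℤ) : ℤ := WithTop.untopD 0 s.min

/-- Junk-valued maximum of a finset of integers. -/
def fmax (s : Finset ℤ) : ℤ := WithBot.unbotD 0 s.max

/-- `P` is a pair partition of the finite set `X ⊂ ℤ`. -/
def IsPairPartition (X : Finset ℤ) (P : Finset (Finset ℤ)) : Prop :=
  (∀ p ∈ P, p.card = 2) ∧
  (∀ p ∈ P, ∀ q ∈ P, p ≠ q → Disjoint p q) ∧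
  P.biUnion id = X

/-- Two distinct pairs `p, q` are linked. -/
def LinkedPairs (p q : Finset ℤ) : Prop :=
  p ≠ q ∧ (∃ a ∈ p, ∃ b ∈ q, ∃ c ∈ q, b ≤ a ∧ a ≤ c) ∧
    (∃ a ∈ q, ∃ b ∈ p, ∃ c ∈ p, b ≤ a ∧ a ≤ c)

/-- A pairing `P` is linked if any two of its pairs are joined by a finite
chain of consecutively linked pairs of `P`. -/
def IsLinked (P : Finset (Finset ℤ)) : Prop :=
  ∀ p ∈ P, ∀ q ∈ P, Relation.ReflTransGen
    (fun a b => a ∈ P ∧ b ∈ P ∧ LinkedPairs a b) p q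

/-- The next larger element `r_X(j)` of `X` after `j` (junk value if none). -/
def rX (X : Finset ℤ) (j : ℤ) : ℤ := fmin (X.filter fun y => j < y)

/-- The integration variable attached to the pair `p ∈ P`. -/
def kOf (P : Finset (Finset ℤ)) (k : ↥P → E3) (p : Finset ℤ) : E3 :=
  if h : p ∈ P then k ⟨p, h⟩ else 0

/-- The pair of `P` containing `j` (for a pair partition this is the unique
member of `P` containing `j`). -/
def thePair (P : Finset (Finset ℤ)) (j : ℤ) : Finset ℤ :=
  (P.filter fun p => j ∈ p).biUnion id

/-- `G^♯_j(k)`: the adjoint `G(k_p)*` if `j = min p`, and `G(k_p)` if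
`j = max p`, where `p ∈ P` is the pair containing `j`. -/
def Gsharp {𝓗 : Type*} [NormedAddCommGroup 𝓗] [InnerProductSpace ℂ 𝓗]
    [CompleteSpace 𝓗] (G : E3 → 𝓗 →L[ℂ] 𝓗) (P : Finset (Finset ℤ))
    (k : ↥P → E3) (j : ℤ) : 𝓗 →L[ℂ] 𝓗 :=
  if j = fmin (thePair P j) then
    ContinuousLinearMap.adjoint (G (kOf P k (thePair P j)))
  else G (kOf P k (thePair P j))

/-- `|K_e|_P = ∑_{p ∈ P, min p ≤ min e, max e ≤ max p} |k_p|` for the edge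
`e = {a, b}` with `a < b`. -/
def Ksum (P : Finset (Finset ℤ)) (k : ↥P → E3) (a b : ℤ) : ℝ :=
  ∑ p ∈ P.filter (fun p => fmin p ≤ a ∧ b ≤ fmax p), ‖kOf P k p‖

/-- The integrand of the contraction `𝒞_P(φ)(r)`: the operator product, over
`j ∈ X` in increasing order, of `G^♯_j(k) ⬝ F_{{j, r_X(j)}}(|K_{{j,r_X(j)}}|_P + r)`,
with the `F`-factor omitted for `j = max X`.  Here the edge label `F e` of the
nearest-neighbour edge `e = {j, r_X(j)} ∈ E_X` is recorded as `F j`, indexed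
by the left endpoint `j` of the edge. -/
def contractionIntegrand {𝓗 : Type*} [NormedAddCommGroup 𝓗]
    [InnerProductSpace ℂ 𝓗] [CompleteSpace 𝓗] (G : E3 → 𝓗 →L[ℂ] 𝓗)
    (X : Finset ℤ) (P : Finset (Finset ℤ)) (F : ℤ → ℝ → 𝓗 →L[ℂ] 𝓗)
    (r : ℝ) (k : ↥P → E3) : 𝓗 →L[ℂ] 𝓗 :=
  ((X.sort (· ≤ ·)).map fun j =>
    Gsharp G P k j *
      (if j = fmax X then 1 else F j (Ksum P k j (rX X j) + r))).prod

/-- The contraction `𝒞_P(φ)(r)`: the Bochner integral of the contraction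
integrand over `k ∈ (ℝ³)^P` (with respect to the product Lebesgue measure). -/
def contraction {𝓗 : Type*} [NormedAddCommGroup 𝓗]
    [InnerProductSpace ℂ 𝓗] [CompleteSpace 𝓗] (G : E3 → 𝓗 →L[ℂ] 𝓗)
    (X : Finset ℤ) (P : Finset (Finset ℤ)) (F : ℤ → ℝ → 𝓗 →L[ℂ] 𝓗)
    (r : ℝ) : 𝓗 →L[ℂ] 𝓗 :=
  ∫ k : ↥P → E3, contractionIntegrand G X P F r k

/-! ### fmin / fmax basics -/

lemma fmin_eq_min' {s : Finset ℤ} (hs : s.Nonempty) : fmin s = s.min' hs := by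
  simp [fmin, ← Finset.coe_min' hs]

lemma fmax_eq_max' {s : Finset ℤ} (hs : s.Nonempty) : fmax s = s.max' hs := by
  simp [fmax, ← Finset.coe_max' hs]

lemma fmin_mem {s : Finset ℤ} (hs : s.Nonempty) : fmin s ∈ s := by
  rw [fmin_eq_min' hs]; exact s.min'_mem hs

lemma fmax_mem {s : Finset ℤ} (hs : s.Nonempty) : fmax s ∈ s := by
  rw [fmax_eq_max' hs]; exact s.max'_mem hs

lemma fmin_le {s : Finset ℤ} {a : ℤ} (ha : a ∈ s) : fmin s ≤ a := by
  rw [fmin_eq_min' ⟨a, ha⟩]; exact s.min'_le a ha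

lemma le_fmax {s : Finset ℤ} {a : ℤ} (ha : a ∈ s) : a ≤ fmax s := by
  rw [fmax_eq_max' ⟨a, ha⟩]; exact s.le_max' a ha

/-! ### pair partition basics -/

section PP
variable {X : Finset ℤ} {P : Finset (Finset ℤ)} (hP : IsPairPartition X P)
include hP

lemma pair_subset {p : Finset ℤ} (hp : p ∈ P) : p ⊆ X := by
  rw [← hP.2.2]; exact fun x hx => Finset.mem_biUnion.2 ⟨p, hp, hx⟩

lemma pair_nonempty {p : Finset ℤ} (hp : p ∈ P) : p.Nonempty := by
  rw [← Finset.card_pos, hP.1 p hp]; norm_num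

lemma pair_eq {p : Finset ℤ} (hp : p ∈ P) : p = {fmin p, fmax p} := by
  have h2 := hP.1 p hp
  obtain ⟨a, b, hab, rfl⟩ := Finset.card_eq_two.1 h2
  have ha : a ∈ ({a, b} : Finset ℤ) := by simp
  have hb : b ∈ ({a, b} : Finset ℤ) := by simp
  rcases le_total a b with h | h
  · have h1 : fmin {a, b} = a :=
      le_antisymm (fmin_le ha) (by
        have := fmin_mem (⟨a, ha⟩ : ({a,b} : Finset ℤ).Nonempty)
        rcases Finset.mem_insert.1 this with h' | h'
        · omega
        · simp at h'; omega)
    have h2' : fmax {a, b} = b :=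
      le_antisymm (by
        have := fmax_mem (⟨a, ha⟩ : ({a,b} : Finset ℤ).Nonempty)
        rcases Finset.mem_insert.1 this with h' | h'
        · omega
        · simp at h'; omega) (le_fmax hb)
    rw [h1, h2']
  · have h1 : fmin {a, b} = b :=
      le_antisymm (fmin_le hb) (by
        have := fmin_mem (⟨a, ha⟩ : ({a,b} : Finset ℤ).Nonempty)
        rcases Finset.mem_insert.1 this with h' | h'
        · omega
        · simp at h'; omega)
    have h2' : fmax {a, b} = a :=
      le_antisymm (by
        have := fmax_mem (⟨a, ha⟩ : ({a,b} : Finset ℤ).Nonempty)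
        rcases Finset.mem_insert.1 this with h' | h'
        · omega
        · simp at h'; omega) (le_fmax ha)
    rw [h1, h2']
    rw [Finset.pair_comm]

lemma fmin_lt_fmax {p : Finset ℤ} (hp : p ∈ P) : fmin p < fmax p := by
  have h2 := hP.1 p hp
  have he := pair_eq hP hp
  rcases lt_or_ge (fmin p) (fmax p) with h | h
  · exact h
  · exfalso
    have : fmin p ≤ fmax p := fmin_le (fmax_mem (pair_nonempty hP hp))
    have : fmin p = fmax p := le_antisymm this h
    rw [he, this] at h2
    simp at h2

lemma mem_pair_iff {p : Finset ℤ} (hp : p ∈ P) {x : ℤ} :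
    x ∈ p ↔ x = fmin p ∨ x = fmax p := by
  conv_lhs => rw [pair_eq hP hp]
  simp

/-- unique pair containing an element -/
lemma exists_pair {j : ℤ} (hj : j ∈ X) : ∃ p ∈ P, j ∈ p := by
  rw [← hP.2.2] at hj; simpa using Finset.mem_biUnion.1 hj

lemma pair_unique {p q : Finset ℤ} (hp : p ∈ P) (hq : q ∈ P) {j : ℤ}
    (hjp : j ∈ p) (hjq : j ∈ q) : p = q := by
  by_contra h
  exact Finset.disjoint_left.1 (hP.2.1 p hp q hq h) hjp hjq

lemma thePair_eq {p : Finset ℤ} (hp : p ∈ P) {j : ℤ} (hj : j ∈ p) :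
    thePair P j = p := by
  have : P.filter (fun q => j ∈ q) = {p} := by
    apply Finset.eq_singleton_iff_unique_mem.2
    exact ⟨Finset.mem_filter.2 ⟨hp, hj⟩,
      fun q hq => pair_unique hP (Finset.mem_filter.1 hq).1 hp (Finset.mem_filter.1 hq).2 hj⟩
  rw [thePair, this]; simp

lemma thePair_mem {j : ℤ} (hj : j ∈ X) : thePair P j ∈ P := by
  obtain ⟨p, hp, hjp⟩ := exists_pair hP hj
  rw [thePair_eq hP hp hjp]; exact hp

lemma mem_thePair {j : ℤ} (hj : j ∈ X) : j ∈ thePair P j := by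
  obtain ⟨p, hp, hjp⟩ := exists_pair hP hj
  rw [thePair_eq hP hp hjp]; exact hjp

lemma card_X : X.card = 2 * P.card := by
  rw [← hP.2.2]
  have : (P.biUnion id).card = ∑ p ∈ P, (id p).card :=
    Finset.card_biUnion (fun p hp q hq hne => hP.2.1 p hp q hq hne)
  rw [this]
  have h2 : ∀ p ∈ P, (id p).card = 2 := fun p hp => hP.1 p hp
  rw [Finset.sum_congr rfl h2, Finset.sum_const, smul_eq_mul, mul_comm]

end PP

/-! ### rX basics -/

section RX
variable {X : Finset ℤ} {j : ℤ}

lemma rX_spec (hj : j ∈ X) (hjm : j ≠ fmax X) :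
    rX X j ∈ X ∧ j < rX X j ∧ ∀ z ∈ X, j < z → rX X j ≤ z := by
  have hXne : X.Nonempty := ⟨j, hj⟩
  have hfil : (X.filter fun y => j < y).Nonempty := by
    refine ⟨fmax X, Finset.mem_filter.2 ⟨fmax_mem hXne, ?_⟩⟩
    exact lt_of_le_of_ne (le_fmax hj) hjm
  have hmem := fmin_mem hfil
  rw [← rX] at hmem
  have h1 := Finset.mem_filter.1 hmem
  exact ⟨h1.1, h1.2, fun z hz hjz => fmin_le (Finset.mem_filter.2 ⟨hz, hjz⟩)⟩

lemma rX_mem (hj : j ∈ X) (hjm : j ≠ fmax X) : rX X j ∈ X := (rX_spec hj hjm).1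
lemma lt_rX (hj : j ∈ X) (hjm : j ≠ fmax X) : j < rX X j := (rX_spec hj hjm).2.1
lemma rX_le (hj : j ∈ X) (hjm : j ≠ fmax X) {z : ℤ} (hz : z ∈ X) (hjz : j < z) :
    rX X j ≤ z := (rX_spec hj hjm).2.2 z hz hjz

/-- No element of `X` lies strictly between `j` and `rX X j`; contrapositive form:
any element of `X` is `≤ j` or `≥ rX X j`. -/
lemma le_or_rX_le (hj : j ∈ X) (hjm : j ≠ fmax X) {z : ℤ} (hz : z ∈ X) :
    z ≤ j ∨ rX X j ≤ z := by
  rcases le_or_gt z j with h | h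
  · exact Or.inl h
  · exact Or.inr (rX_le hj hjm hz h)

end RX

/-! ### straddler sets and linkedness -/

/-- The set of pairs straddling the gap `(j, rX X j)`. -/
def Strad (X : Finset ℤ) (P : Finset (Finset ℤ)) (j : ℤ) : Finset (Finset ℤ) :=
  P.filter fun p => fmin p ≤ j ∧ rX X j ≤ fmax p

section Linked
variable {X : Finset ℤ} {P : Finset (Finset ℤ)}

/-- Chain invariance: a property preserved along linked pairs propagates through a linked
pairing. -/
lemma chain_invariant (hPl : IsLinked P) (A : Finset ℤ → Prop)
    (hpres : ∀ a ∈ P, ∀ b ∈ P, A a → LinkedPairs a b → A b)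
    {p q : Finset ℤ} (hp : p ∈ P) (hq : q ∈ P) (hA : A p) : A q := by
  have h := hPl p hp q hq
  induction h with
  | refl => exact hA
  | tail _ hbc ih => exact hpres _ hbc.1 _ hbc.2.1 (ih hbc.1) hbc.2.2

variable (hP : IsPairPartition X P)
include hP

/-- Every gap of a linked pairing is straddled by some pair. -/
lemma Strad_nonempty (hPl : IsLinked P) {j : ℤ} (hj : j ∈ X) (hjm : j ≠ fmax X) :
    (Strad X P j).Nonempty := by
  by_contra hempty
  rw [Finset.not_nonempty_iff_eq_empty] at hempty
  have hstr : ∀ p ∈ P, ¬(fmin p ≤ j ∧ rX X j ≤ fmax p) := by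
    intro p hp hc
    have : p ∈ Strad X P j := Finset.mem_filter.2 ⟨hp, hc⟩
    simp [hempty] at this
  -- every pair is entirely ≤ j or entirely ≥ rX X j
  have hsplit : ∀ p ∈ P, fmax p ≤ j ∨ rX X j ≤ fmin p := by
    intro p hp
    have hminX := pair_subset hP hp (fmin_mem (pair_nonempty hP hp))
    have hmaxX := pair_subset hP hp (fmax_mem (pair_nonempty hP hp))
    rcases le_or_rX_le hj hjm hmaxX with h | h
    · exact Or.inl h
    · rcases le_or_rX_le hj hjm hminX with h' | h'
      · exact absurd ⟨h', h⟩ (hstr p hp)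
      · exact Or.inr h'
  -- invariant: fmax p ≤ j
  have hXne : X.Nonempty := ⟨j, hj⟩
  set A : Finset ℤ → Prop := fun p => fmax p ≤ j with hA
  have hpres : ∀ a ∈ P, ∀ b ∈ P, A a → LinkedPairs a b → A b := by
    intro a ha b hb hAa hlink
    rcases hsplit b hb with h | h
    · exact h
    · exfalso
      obtain ⟨_, _, ⟨x, hxb, y, hya, z, hza, hyx, hxz⟩⟩ := hlink
      have h1 : rX X j ≤ x := le_trans (le_trans h (fmin_le hxb)) (le_refl x)
      have h2 : x ≤ j := le_trans hxz (le_trans (le_fmax hza) hAa)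
      have := lt_rX hj hjm
      omega
  -- pair of j satisfies A
  have hjP := thePair_mem hP hj
  have hAj : A (thePair P j) := by
    rcases hsplit _ hjP with h | h
    · exact h
    · exfalso
      have := le_trans h (fmin_le (mem_thePair hP hj))
      have := lt_rX hj hjm
      omega
  -- pair of fmax X does not satisfy A
  have hmX : fmax X ∈ X := fmax_mem hXne
  have hmP := thePair_mem hP hmX
  have hnA : ¬ A (thePair P (fmax X)) := by
    intro h
    have h1 : fmax X ≤ fmax (thePair P (fmax X)) := le_fmax (mem_thePair hP hmX)
    have h2 : j < fmax X := lt_of_le_of_ne (le_fmax hj) hjm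
    omega
  exact hnA (chain_invariant hPl A hpres hjP hmP hAj)

end Linked
section Hall
variable {X : Finset ℤ} {P : Finset (Finset ℤ)}
variable (hP : IsPairPartition X P)
include hP

/-- Region lemma: between two consecutive gaps of `T`, some element's pair straddles one
of the two bounding gaps (hence lies in `N`). -/
lemma region_lemma (hPl : IsLinked P) {T : Finset ℤ} (hTX : T ⊆ X)
    (hTm : ∀ j ∈ T, j ≠ fmax X) {t' t : ℤ} (ht' : t' ∈ T) (ht : t ∈ T) (htt : t' < t) :
    ∃ z ∈ X, rX X t' ≤ z ∧ z ≤ t ∧ thePair P z ∈ T.biUnion (Strad X P) := by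
  by_contra hcon
  push_neg at hcon
  set N := T.biUnion (Strad X P) with hN
  set lo := rX X t' with hlo
  have ht'X : t' ∈ X := hTX ht'
  have ht'm : t' ≠ fmax X := hTm t' ht'
  have htX : t ∈ X := hTX ht
  have htm : t ≠ fmax X := hTm t ht
  have hlot : lo ≤ t := rX_le ht'X ht'm htX htt
  have ht'lo : t' < lo := lt_rX ht'X ht'm
  -- main claim: the pair of any element of the region lies inside the region
  have hclaim : ∀ z ∈ X, lo ≤ z → z ≤ t → lo ≤ fmin (thePair P z) ∧ fmax (thePair P z) ≤ t := by
    intro z hz hloz hzt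
    have hpz := thePair_mem hP hz
    have hzz := mem_thePair hP hz
    have hminX : fmin (thePair P z) ∈ X := pair_subset hP hpz (fmin_mem (pair_nonempty hP hpz))
    have hmaxX : fmax (thePair P z) ∈ X := pair_subset hP hpz (fmax_mem (pair_nonempty hP hpz))
    constructor
    · by_contra hlt
      push_neg at hlt
      -- fmin < lo = rX t' so fmin ≤ t', and fmax ≥ z ≥ lo: pair straddles gap t'
      have h1 : fmin (thePair P z) ≤ t' := by
        rcases le_or_rX_le ht'X ht'm hminX with h | h
        · exact h
        · omega
      have h2 : rX X t' ≤ fmax (thePair P z) := le_trans hloz (le_fmax hzz)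
      have : thePair P z ∈ N := Finset.mem_biUnion.2
        ⟨t', ht', Finset.mem_filter.2 ⟨hpz, h1, h2⟩⟩
      exact hcon z hz hloz hzt this
    · by_contra hgt
      push_neg at hgt
      -- fmax > t so fmax ≥ rX t, and fmin ≤ z ≤ t: pair straddles gap t
      have h1 : rX X t ≤ fmax (thePair P z) := by
        rcases le_or_rX_le htX htm hmaxX with h | h
        · omega
        · exact h
      have h2 : fmin (thePair P z) ≤ t := le_trans (fmin_le hzz) hzt
      have : thePair P z ∈ N := Finset.mem_biUnion.2
        ⟨t, ht, Finset.mem_filter.2 ⟨hpz, h2, h1⟩⟩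
      exact hcon z hz hloz hzt this
  -- invariant argument
  set A : Finset ℤ → Prop := fun p => lo ≤ fmin p ∧ fmax p ≤ t with hA
  have hpres : ∀ a ∈ P, ∀ b ∈ P, A a → LinkedPairs a b → A b := by
    intro a ha b hb hAa hlink
    obtain ⟨_, _, ⟨x, hxb, y, hya, w, hwa, hyx, hxw⟩⟩ := hlink
    have hxX : x ∈ X := pair_subset hP hb hxb
    have hx1 : lo ≤ x := le_trans (le_trans hAa.1 (fmin_le hya)) hyx
    have hx2 : x ≤ t := le_trans hxw (le_trans (le_fmax hwa) hAa.2)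
    have : thePair P x = b := thePair_eq hP hb hxb
    have := hclaim x hxX hx1 hx2
    rw [‹thePair P x = b›] at this
    exact this
  -- base: pair of t is in A
  have htP := thePair_mem hP htX
  have hAt : A (thePair P t) := hclaim t htX hlot le_rfl
  -- target: pair of fmin X is not in A
  have hXne : X.Nonempty := ⟨t, htX⟩
  have hminX : fmin X ∈ X := fmin_mem hXne
  have hmP := thePair_mem hP hminX
  have hnA : ¬ A (thePair P (fmin X)) := by
    intro h
    have h1 : fmin (thePair P (fmin X)) ≤ fmin X := fmin_le (mem_thePair hP hminX)
    have h2 : fmin X ≤ t' := fmin_le ht'X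
    omega
  exact hnA (chain_invariant hPl A hpres htP hmP hAt)

/-- **Hall condition** for the straddler sets, with capacity 2. -/
lemma hall_condition (hPl : IsLinked P) {T : Finset ℤ} (hTX : T ⊆ X)
    (hTm : ∀ j ∈ T, j ≠ fmax X) :
    T.card ≤ 2 * (T.biUnion (Strad X P)).card := by
  rcases T.eq_empty_or_nonempty with rfl | hTne
  · simp
  set N := T.biUnion (Strad X P) with hN
  have key : ∀ t ∈ T, ∃ z, z ∈ N.biUnion id ∧ z ≤ t ∧
      (t ≠ fmin T → fmax (T.filter (· < t)) < z) := by
    intro t htT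
    by_cases hmin : t = fmin T
    · obtain ⟨q, hq⟩ := Strad_nonempty hP hPl (hTX htT) (hTm t htT)
      have hqf := Finset.mem_filter.1 hq
      refine ⟨fmin q, Finset.mem_biUnion.2 ⟨q, Finset.mem_biUnion.2 ⟨t, htT, hq⟩,
        fmin_mem (pair_nonempty hP hqf.1)⟩, hqf.2.1, fun h => absurd hmin h⟩
    · -- previous element of T
      have hfne : (T.filter (· < t)).Nonempty := by
        refine ⟨fmin T, Finset.mem_filter.2 ⟨fmin_mem hTne, ?_⟩⟩
        exact lt_of_le_of_ne (fmin_le htT) (Ne.symm hmin)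
      set t' := fmax (T.filter (· < t)) with ht'
      have ht'f := fmax_mem hfne
      rw [← ht'] at ht'f
      have ht'T : t' ∈ T := (Finset.mem_filter.1 ht'f).1
      have ht't : t' < t := (Finset.mem_filter.1 ht'f).2
      obtain ⟨z, hzX, hz1, hz2, hz3⟩ := region_lemma hP hPl hTX hTm ht'T htT ht't
      refine ⟨z, Finset.mem_biUnion.2 ⟨thePair P z, hz3, mem_thePair hP hzX⟩, hz2, fun _ => ?_⟩
      have := lt_rX (hTX ht'T) (hTm t' ht'T)
      omega
  choose φ hφ1 hφ2 hφ3 using key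
  have hinj : Set.InjOn (fun t => if h : t ∈ T then φ t h else 0) T := by
    intro t₁ h₁ t₂ h₂ heq
    have h₁' : t₁ ∈ T := h₁
    have h₂' : t₂ ∈ T := h₂
    simp only [dif_pos h₁', dif_pos h₂'] at heq
    have heq' : φ t₁ h₁' = φ t₂ h₂' := heq
    by_contra hne
    -- wlog t₁ < t₂
    rcases lt_or_gt_of_ne hne with hlt | hlt
    · have h2min : t₂ ≠ fmin T := by
        intro h; rw [h] at hlt; exact absurd (fmin_le h₁') (not_le.2 hlt)
      have := hφ3 t₂ h₂' h2min
      have hmem : t₁ ∈ T.filter (· < t₂) := Finset.mem_filter.2 ⟨h₁, hlt⟩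
      have := le_fmax hmem
      have := hφ2 t₁ h₁'
      omega
    · have h1min : t₁ ≠ fmin T := by
        intro h; rw [h] at hlt; exact absurd (fmin_le h₂') (not_le.2 hlt)
      have := hφ3 t₁ h₁' h1min
      have hmem : t₂ ∈ T.filter (· < t₁) := Finset.mem_filter.2 ⟨h₂, hlt⟩
      have := le_fmax hmem
      have := hφ2 t₂ h₂'
      omega
  have hmaps : ∀ t ∈ T, (if h : t ∈ T then φ t h else 0) ∈ N.biUnion id := by
    intro t ht; rw [dif_pos ht]; exact hφ1 t ht
  have hcard : T.card ≤ (N.biUnion id).card :=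
    Finset.card_le_card_of_injOn _ hmaps hinj
  have hNP : N ⊆ P := by
    intro p hp
    obtain ⟨t, _, hpt⟩ := Finset.mem_biUnion.1 hp
    exact (Finset.mem_filter.1 hpt).1
  have hNcard : (N.biUnion id).card = 2 * N.card := by
    have h1 : (N.biUnion id).card = ∑ p ∈ N, (id p).card :=
      Finset.card_biUnion (fun p hp q hq hne => hP.2.1 p (hNP hp) q (hNP hq) hne)
    have h2 : ∀ p ∈ N, (id p).card = 2 := fun p hp => hP.1 p (hNP hp)
    rw [h1, Finset.sum_congr rfl h2, Finset.sum_const, smul_eq_mul, mul_comm]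
  omega

end Hall
section Assign
variable {X : Finset ℤ} {P : Finset (Finset ℤ)}

/-- From Hall's theorem: an assignment of a straddling pair to each gap, with each pair
used at most twice. -/
lemma exists_assignment (hP : IsPairPartition X P) (hPl : IsLinked P) :
    ∃ f : ℤ → Finset ℤ,
      (∀ j ∈ X, j ≠ fmax X → f j ∈ Strad X P j) ∧
      ∀ p, ((X.filter fun j => j ≠ fmax X ∧ f j = p).card ≤ 2) := by
  classical
  set X' : Finset ℤ := X.filter (fun j => j ≠ fmax X) with hX'
  set t : ↥X' → Finset (Finset ℤ × Fin 2) :=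
    fun j => (Strad X P j.1) ×ˢ (Finset.univ : Finset (Fin 2)) with ht
  have hall : ∀ s : Finset ↥X', s.card ≤ (s.biUnion t).card := by
    intro s
    set T : Finset ℤ := s.image Subtype.val with hT
    have hTcard : T.card = s.card := Finset.card_image_of_injective _ Subtype.val_injective
    have hTX : T ⊆ X := by
      intro x hx
      obtain ⟨⟨y, hy⟩, _, rfl⟩ := Finset.mem_image.1 hx
      exact (Finset.mem_filter.1 hy).1
    have hTm : ∀ j ∈ T, j ≠ fmax X := by
      intro x hx
      obtain ⟨⟨y, hy⟩, _, rfl⟩ := Finset.mem_image.1 hx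
      exact (Finset.mem_filter.1 hy).2
    have hprod : s.biUnion t = (T.biUnion (Strad X P)) ×ˢ (Finset.univ : Finset (Fin 2)) := by
      ext ⟨p, i⟩
      simp only [Finset.mem_biUnion, Finset.mem_product, Finset.mem_univ, and_true, ht,
        Finset.mem_image, hT]
      constructor
      · rintro ⟨j, hj, hmem⟩
        exact ⟨j.1, ⟨j, hj, rfl⟩, hmem⟩
      · rintro ⟨x, ⟨j, hj, rfl⟩, hmem⟩
        exact ⟨j, hj, hmem⟩
    rw [hprod, Finset.card_product]
    have := hall_condition hP hPl hTX hTm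
    simp only [Finset.card_univ, Fintype.card_fin]
    omega
  obtain ⟨f₀, hf₀inj, hf₀mem⟩ :=
    (Finset.all_card_le_biUnion_card_iff_exists_injective t).1 hall
  refine ⟨fun j => if h : j ∈ X' then (f₀ ⟨j, h⟩).1 else ∅, ?_, ?_⟩
  · intro j hj hjm
    have hj' : j ∈ X' := Finset.mem_filter.2 ⟨hj, hjm⟩
    show (if h : j ∈ X' then (f₀ ⟨j, h⟩).1 else ∅) ∈ Strad X P j
    rw [dif_pos hj']
    exact (Finset.mem_product.1 (hf₀mem ⟨j, hj'⟩)).1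
  · intro p
    have hcard : ((X.filter fun j => j ≠ fmax X ∧
        (if h : j ∈ X' then (f₀ ⟨j, h⟩).1 else ∅) = p).card ≤ (Finset.univ : Finset (Fin 2)).card) := by
      apply Finset.card_le_card_of_injOn
        (fun j => if h : j ∈ X' then (f₀ ⟨j, h⟩).2 else 0)
      · intro j _; exact Finset.mem_univ _
      · intro j₁ hj₁ j₂ hj₂ heq
        have hj₁' := Finset.mem_coe.1 hj₁
        have hj₂' := Finset.mem_coe.1 hj₂
        have hh₁ := Finset.mem_filter.1 hj₁'
        have hh₂ := Finset.mem_filter.1 hj₂'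
        obtain ⟨hj₁X, hj₁m, hj₁p⟩ : j₁ ∈ X ∧ j₁ ≠ fmax X ∧ _ := ⟨hh₁.1, hh₁.2.1, hh₁.2.2⟩
        obtain ⟨hj₂X, hj₂m, hj₂p⟩ : j₂ ∈ X ∧ j₂ ≠ fmax X ∧ _ := ⟨hh₂.1, hh₂.2.1, hh₂.2.2⟩
        have h₁ : j₁ ∈ X' := Finset.mem_filter.2 ⟨hj₁X, hj₁m⟩
        have h₂ : j₂ ∈ X' := Finset.mem_filter.2 ⟨hj₂X, hj₂m⟩
        rw [dif_pos h₁] at hj₁p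
        rw [dif_pos h₂] at hj₂p
        simp only [dif_pos h₁, dif_pos h₂] at heq
        have : f₀ ⟨j₁, h₁⟩ = f₀ ⟨j₂, h₂⟩ := by
          apply Prod.ext
          · rw [hj₁p, hj₂p]
          · exact heq
        have := hf₀inj this
        exact congrArg Subtype.val this
    simpa using hcard

end Assign


/-! ### analytic helper lemmas -/

lemma Strad_eq (X : Finset ℤ) (P : Finset (Finset ℤ)) (j : ℤ) :
    Strad X P j = P.filter fun p => fmin p ≤ j ∧ rX X j ≤ fmax p := rfl

section Analysis
variable {𝓗 : Type*} [NormedAddCommGroup 𝓗] [InnerProductSpace ℂ 𝓗] [CompleteSpace 𝓗]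

lemma stronglyMeasurable_list_prod {α : Type*} [MeasurableSpace α] (l : List ℤ)
    (φ : ℤ → α → 𝓗 →L[ℂ] 𝓗) (h : ∀ j ∈ l, StronglyMeasurable (φ j)) :
    StronglyMeasurable fun k => (l.map (φ · k)).prod := by
  induction l with
  | nil => simpa using stronglyMeasurable_const
  | cons a t ih =>
    simp only [List.map_cons, List.prod_cons]
    exact (h a (by simp)).mul (ih fun j hj => h j (by simp [hj]))

lemma measurable_kOf (P : Finset (Finset ℤ)) (q : Finset ℤ) :
    Measurable fun k : ↥P → E3 => kOf P k q := by
  by_cases h : q ∈ P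
  · simp only [kOf, dif_pos h]
    exact measurable_pi_apply _
  · simp only [kOf, dif_neg h]
    exact measurable_const

lemma measurable_Ksum (P : Finset (Finset ℤ)) (a b : ℤ) :
    Measurable fun k : ↥P → E3 => Ksum P k a b := by
  unfold Ksum
  exact Finset.measurable_sum _ fun p _ => (measurable_kOf P p).norm

lemma stronglyMeasurable_Gsharp (G : E3 → 𝓗 →L[ℂ] 𝓗) (hG : StronglyMeasurable G)
    (P : Finset (Finset ℤ)) (j : ℤ) :
    StronglyMeasurable fun k : ↥P → E3 => Gsharp G P k j := by
  by_cases h : j = fmin (thePair P j)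
  · simp only [Gsharp, if_pos h]
    exact (LinearIsometryEquiv.continuous _).comp_stronglyMeasurable
      (hG.comp_measurable (measurable_kOf P _))
  · simp only [Gsharp, if_neg h]
    exact hG.comp_measurable (measurable_kOf P _)

lemma norm_Gsharp (G : E3 → 𝓗 →L[ℂ] 𝓗) (P : Finset (Finset ℤ)) (k : ↥P → E3) (j : ℤ) :
    ‖Gsharp G P k j‖ = ‖G (kOf P k (thePair P j))‖ := by
  by_cases h : j = fmin (thePair P j)
  · simp only [Gsharp, if_pos h]
    exact LinearIsometryEquiv.norm_map ContinuousLinearMap.adjoint _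
  · simp only [Gsharp, if_neg h]

lemma ae_ne_zero (P : Finset (Finset ℤ)) :
    ∀ᵐ k : ↥P → E3, ∀ p : ↥P, k p ≠ 0 := by
  have hnull : ∀ p : ↥P, volume {k : ↥P → E3 | k p = 0} = 0 := by
    intro p
    have hset : {k : ↥P → E3 | k p = 0} =
        Set.pi Set.univ (fun q => if q = p then ({0} : Set E3) else Set.univ) := by
      ext k
      simp only [Set.mem_setOf_eq, Set.mem_pi, Set.mem_univ, forall_true_left]
      constructor
      · intro h q
        split_ifs with hq
        · subst hq; simpa using h
        · trivial
      · intro h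
        have := h p
        simpa using this
    rw [hset, volume_pi_pi]
    apply Finset.prod_eq_zero (Finset.mem_univ p)
    simp
  have : volume {k : ↥P → E3 | ¬ ∀ p : ↥P, k p ≠ 0} = 0 := by
    have hsub : {k : ↥P → E3 | ¬ ∀ p : ↥P, k p ≠ 0} ⊆ ⋃ p : ↥P, {k : ↥P → E3 | k p = 0} := by
      intro k hk
      simp only [Set.mem_setOf_eq, not_forall, not_not] at hk
      obtain ⟨p, hp⟩ := hk
      exact Set.mem_iUnion.2 ⟨p, hp⟩
    exact measure_mono_null hsub (measure_iUnion_null fun p => hnull p)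
  exact this

end Analysis
/-- **Lemma 4.9 (a): bound on linked renormalized Feynman graphs.**
Let `P` be a linked pair partition of `X`, `|X| ≥ 2`, and suppose each edge
label satisfies `‖F_e(r)‖ ≤ C_F (r⁻¹ + 1)` for `r > 0`.  If
`C₀ = (∫ (|k|⁻¹+1) ‖G(k)‖² dk)^{1/2}` and `C₁ = (∫ (|k|⁻¹+1)² ‖G(k)‖² dk)^{1/2}`
are finite, then for every `r ≥ 0` the integrand of the contraction is Bochner
integrable and `‖𝒞_P(φ)(r)‖ ≤ C_F^{|X|-1} C₁^{|X|-2} C₀²`. -/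
theorem stmt8 {𝓗 : Type*} [NormedAddCommGroup 𝓗] [InnerProductSpace ℂ 𝓗]
    [CompleteSpace 𝓗]
    (G : E3 → 𝓗 →L[ℂ] 𝓗) (hGmeas : StronglyMeasurable G)
    (hC0 : Integrable (fun k : E3 => (‖k‖⁻¹ + 1) * ‖G k‖ ^ 2))
    (hC1 : Integrable (fun k : E3 => (‖k‖⁻¹ + 1) ^ 2 * ‖G k‖ ^ 2))
    (X : Finset ℤ) (hX : 2 ≤ X.card)
    (P : Finset (Finset ℤ)) (hP : IsPairPartition X P) (hPlinked : IsLinked P)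
    (F : ℤ → ℝ → 𝓗 →L[ℂ] 𝓗)
    (hFmeas : ∀ j ∈ X, j ≠ fmax X →
      StronglyMeasurable (fun r : Set.Ioi (0 : ℝ) => F j r))
    (CF : ℝ) (hCF : 0 ≤ CF)
    (hFbound : ∀ j ∈ X, j ≠ fmax X → ∀ r : ℝ, 0 < r →
      ‖F j r‖ ≤ CF * (r⁻¹ + 1)) :
    ∀ r : ℝ, 0 ≤ r →
      Integrable (contractionIntegrand G X P F r) ∧
      ‖contraction G X P F r‖ ≤
        CF ^ (X.card - 1) *
          (Real.sqrt (∫ k : E3, (‖k‖⁻¹ + 1) ^ 2 * ‖G k‖ ^ 2)) ^ (X.card - 2) *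
          (Real.sqrt (∫ k : E3, (‖k‖⁻¹ + 1) * ‖G k‖ ^ 2)) ^ 2 := by
  classical
  intro r hr
  obtain ⟨f, hfmem, hfcard⟩ := exists_assignment hP hPlinked
  have hXne : X.Nonempty := by rw [← Finset.card_pos]; omega
  have hfmaxX : fmax X ∈ X := fmax_mem hXne
  set X' : Finset ℤ := X.erase (fmax X) with hX'
  have hX'card : X'.card = X.card - 1 := Finset.card_erase_of_mem hfmaxX
  have hPcard : X.card = 2 * P.card := card_X hP
  set ℓ : Finset ℤ → ℕ := fun p => (X'.filter fun j => f j = p).card with hℓ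
  have hℓ2 : ∀ p, ℓ p ≤ 2 := by
    intro p
    have hsetEq : X'.filter (fun j => f j = p) =
        X.filter fun j => j ≠ fmax X ∧ f j = p := by
      ext j
      simp only [Finset.mem_filter, hX', Finset.mem_erase]
      tauto
    rw [hℓ]
    simp only [hsetEq]
    exact hfcard p
  have hmaps : ∀ j ∈ X', f j ∈ P := by
    intro j hj
    have hj' := Finset.mem_erase.1 hj
    exact (Finset.mem_filter.1 (hfmem j hj'.2 hj'.1)).1
  have hsum : ∑ p ∈ P, ℓ p = X'.card :=
    (Finset.card_eq_sum_card_fiberwise hmaps).symm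
  have hp₀ : ∃ p₀ ∈ P, ℓ p₀ ≤ 1 := by
    by_contra hcon
    push_neg at hcon
    have : 2 * P.card ≤ ∑ p ∈ P, ℓ p := by
      calc 2 * P.card = ∑ _p ∈ P, 2 := by rw [Finset.sum_const, smul_eq_mul, mul_comm]
        _ ≤ ∑ p ∈ P, ℓ p := Finset.sum_le_sum fun p hp => hcon p hp
    omega
  -- the per-coordinate majorants
  set g : ↥P → E3 → ℝ := fun p v => ‖G v‖ ^ 2 * (‖v‖⁻¹ + 1) ^ ℓ p.1 with hg
  have hone_le : ∀ v : E3, (1 : ℝ) ≤ ‖v‖⁻¹ + 1 := fun v => by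
    have : (0:ℝ) ≤ ‖v‖⁻¹ := inv_nonneg.2 (norm_nonneg _)
    linarith
  have hgnn : ∀ p (v : E3), 0 ≤ g p v := fun p v =>
    mul_nonneg (by positivity) (pow_nonneg (by positivity) _)
  have hgle2 : ∀ p (v : E3), g p v ≤ (‖v‖⁻¹ + 1) ^ 2 * ‖G v‖ ^ 2 := by
    intro p v
    show ‖G v‖ ^ 2 * (‖v‖⁻¹ + 1) ^ ℓ p.1 ≤ _
    rw [mul_comm]
    apply mul_le_mul_of_nonneg_right _ (by positivity)
    exact pow_le_pow_right₀ (hone_le v) (hℓ2 p.1)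
  have hgle1 : ∀ p : ↥P, ℓ p.1 ≤ 1 → ∀ v : E3, g p v ≤ (‖v‖⁻¹ + 1) * ‖G v‖ ^ 2 := by
    intro p hp v
    show ‖G v‖ ^ 2 * (‖v‖⁻¹ + 1) ^ ℓ p.1 ≤ _
    rw [mul_comm]
    apply mul_le_mul_of_nonneg_right _ (by positivity)
    calc (‖v‖⁻¹ + 1) ^ ℓ p.1 ≤ (‖v‖⁻¹ + 1) ^ 1 := pow_le_pow_right₀ (hone_le v) hp
      _ = ‖v‖⁻¹ + 1 := pow_one _
  have hgsm : ∀ p : ↥P, AEStronglyMeasurable (g p) volume := by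
    intro p
    apply Measurable.aestronglyMeasurable
    exact ((hGmeas.norm.measurable).pow_const 2).mul
      ((measurable_norm.inv.add measurable_const).pow_const _)
  have hgint : ∀ p : ↥P, Integrable (g p) := by
    intro p
    apply Integrable.mono' hC1 (hgsm p)
    refine Filter.Eventually.of_forall fun v => ?_
    rw [Real.norm_of_nonneg (hgnn p v)]
    exact hgle2 p v
  have hgI2 : ∀ p : ↥P, ∫ v : E3, g p v ≤ ∫ v : E3, (‖v‖⁻¹ + 1) ^ 2 * ‖G v‖ ^ 2 :=
    fun p => integral_mono (hgint p) hC1 (hgle2 p)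
  have hgI1 : ∀ p : ↥P, ℓ p.1 ≤ 1 → ∫ v : E3, g p v ≤ ∫ v : E3, (‖v‖⁻¹ + 1) * ‖G v‖ ^ 2 :=
    fun p hp => integral_mono (hgint p) hC0 (hgle1 p hp)
  have hgInn : ∀ p : ↥P, 0 ≤ ∫ v : E3, g p v :=
    fun p => integral_nonneg (hgnn p)
  -- the global majorant
  set M : (↥P → E3) → ℝ := fun k => CF ^ (X.card - 1) * ∏ p : ↥P, g p (k p) with hM
  have hMint : Integrable M := by
    apply Integrable.const_mul
    exact Integrable.fintype_prod (f := g) hgint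
  -- positivity of the Ksum argument and pointwise norm bound
  have hKge : ∀ (k : ↥P → E3), ∀ j ∈ X, j ≠ fmax X →
      ‖kOf P k (f j)‖ ≤ Ksum P k j (rX X j) := by
    intro k j hj hjm
    have hfj : f j ∈ P.filter fun p => fmin p ≤ j ∧ rX X j ≤ fmax p := hfmem j hj hjm
    exact Finset.single_le_sum (fun p _ => norm_nonneg _) hfj
  have hkOf_pos : ∀ (k : ↥P → E3), (∀ p : ↥P, k p ≠ 0) → ∀ j ∈ X, j ≠ fmax X →
      0 < ‖kOf P k (f j)‖ := by
    intro k hk j hj hjm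
    have hfP : f j ∈ P := hmaps j (Finset.mem_erase.2 ⟨hjm, hj⟩)
    rw [norm_pos_iff]
    simp only [kOf, dif_pos hfP]
    exact hk ⟨f j, hfP⟩
  have hKpos : ∀ (k : ↥P → E3), (∀ p : ↥P, k p ≠ 0) → ∀ j ∈ X, j ≠ fmax X →
      0 < Ksum P k j (rX X j) + r := by
    intro k hk j hj hjm
    have h1 := hkOf_pos k hk j hj hjm
    have h2 := hKge k j hj hjm
    linarith
  -- pointwise norm bound
  have hbound : ∀ k : ↥P → E3, (∀ p : ↥P, k p ≠ 0) →
      ‖contractionIntegrand G X P F r k‖ ≤ M k := by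
    intro k hk
    set b : ℤ → ℝ := fun j => ‖G (kOf P k (thePair P j))‖ *
      (if j = fmax X then 1 else CF * (‖kOf P k (f j)‖⁻¹ + 1)) with hb
    have hbnn : ∀ j, 0 ≤ b j := by
      intro j
      apply mul_nonneg (norm_nonneg _)
      split_ifs
      · norm_num
      · positivity
    -- step 1: each factor is bounded
    have hstep1 : ∀ j ∈ X,
        ‖Gsharp G P k j * (if j = fmax X then 1 else F j (Ksum P k j (rX X j) + r))‖ ≤ b j := by
      intro j hj
      refine le_trans (norm_mul_le _ _) ?_
      rw [hb, norm_Gsharp]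
      apply mul_le_mul_of_nonneg_left _ (norm_nonneg _)
      by_cases hjm : j = fmax X
      · simp only [if_pos hjm]
        exact ContinuousLinearMap.norm_id_le
      · simp only [if_neg hjm]
        have ht := hKpos k hk j hj hjm
        refine le_trans (hFbound j hj hjm _ ht) ?_
        apply mul_le_mul_of_nonneg_left _ hCF
        have h1 := hkOf_pos k hk j hj hjm
        have h2 : ‖kOf P k (f j)‖ ≤ Ksum P k j (rX X j) + r :=
          le_trans (hKge k j hj hjm) (by linarith)
        have : (Ksum P k j (rX X j) + r)⁻¹ ≤ ‖kOf P k (f j)‖⁻¹ :=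
          inv_anti₀ h1 h2
        linarith
    -- step 2: norm of the product is at most the finset product of the bounds
    have hsortprod : ∀ h : ℤ → ℝ, ((X.sort (· ≤ ·)).map h).prod = ∏ j ∈ X, h j := by
      intro h
      calc ((X.sort (· ≤ ·)).map h).prod = ((X.toList).map h).prod :=
            List.Perm.prod_eq ((Finset.sort_perm_toList _ _).map h)
        _ = ∏ j ∈ X, h j := Finset.prod_map_toList X h
    have hstep2 : ‖contractionIntegrand G X P F r k‖ ≤ ∏ j ∈ X, b j := by
      have hlne : (X.sort (· ≤ ·)) ≠ [] := by
        apply List.ne_nil_of_length_pos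
        rw [Finset.length_sort]
        omega
      have hmapne : ((X.sort (· ≤ ·)).map fun j =>
          Gsharp G P k j * (if j = fmax X then 1 else F j (Ksum P k j (rX X j) + r))) ≠ [] := by
        simpa using hlne
      refine le_trans (List.norm_prod_le' hmapne) ?_
      rw [List.map_map]
      have h1 : ((X.sort (· ≤ ·)).map (norm ∘ fun j =>
          Gsharp G P k j * (if j = fmax X then 1 else F j (Ksum P k j (rX X j) + r)))).prod
          = ∏ j ∈ X, ‖Gsharp G P k j * (if j = fmax X then 1 else F j (Ksum P k j (rX X j) + r))‖ :=
        hsortprod _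
      rw [h1]
      exact Finset.prod_le_prod (fun j _ => norm_nonneg _) fun j hj => hstep1 j hj
    -- step 3: evaluate the finset product of bounds
    have hstep3 : ∏ j ∈ X, b j = M k := by
      have hsplit : ∏ j ∈ X, b j =
          (∏ j ∈ X, ‖G (kOf P k (thePair P j))‖) *
          ∏ j ∈ X, (if j = fmax X then 1 else CF * (‖kOf P k (f j)‖⁻¹ + 1)) := by
        rw [← Finset.prod_mul_distrib]
      -- first product, over pairs
      have h4 : ∏ j ∈ X, ‖G (kOf P k (thePair P j))‖ = ∏ p ∈ P, ‖G (kOf P k p)‖ ^ 2 := by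
        have hdisj : (↑P : Set (Finset ℤ)).PairwiseDisjoint (id : Finset ℤ → Finset ℤ) :=
          fun p hp q hq hne => hP.2.1 p hp q hq hne
        conv_lhs => rw [← hP.2.2]
        rw [Finset.prod_biUnion hdisj]
        apply Finset.prod_congr rfl
        intro p hp
        have : ∀ j ∈ (id p : Finset ℤ), ‖G (kOf P k (thePair P j))‖ = ‖G (kOf P k p)‖ := by
          intro j hj
          rw [thePair_eq hP hp hj]
        rw [Finset.prod_congr rfl this, Finset.prod_const]
        simp only [id_eq]
        rw [hP.1 p hp]
      -- second product
      have h5 : ∏ j ∈ X, (if j = fmax X then 1 else CF * (‖kOf P k (f j)‖⁻¹ + 1)) =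
          CF ^ (X.card - 1) * ∏ p ∈ P, (‖kOf P k p‖⁻¹ + 1) ^ ℓ p := by
        rw [← Finset.mul_prod_erase X _ hfmaxX, if_pos rfl, one_mul]
        have h6 : ∀ j ∈ X', (if j = fmax X then 1 else CF * (‖kOf P k (f j)‖⁻¹ + 1))
            = CF * (‖kOf P k (f j)‖⁻¹ + 1) := by
          intro j hj
          rw [if_neg (Finset.mem_erase.1 hj).1]
        rw [Finset.prod_congr rfl h6, Finset.prod_mul_distrib, Finset.prod_const, hX'card]
        congr 1
        rw [← Finset.prod_fiberwise_of_maps_to hmaps (fun j => ‖kOf P k (f j)‖⁻¹ + 1)]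
        apply Finset.prod_congr rfl
        intro p hp
        have h7 : ∀ j ∈ X'.filter (fun j => f j = p),
            ‖kOf P k (f j)‖⁻¹ + 1 = ‖kOf P k p‖⁻¹ + 1 := by
          intro j hj
          rw [(Finset.mem_filter.1 hj).2]
        rw [Finset.prod_congr rfl h7, Finset.prod_const]
      rw [hsplit, h4, h5]
      simp only [hM]
      have h8 : ∏ p : ↥P, g p (k p) =
          ∏ p ∈ P, (‖G (kOf P k p)‖ ^ 2 * (‖kOf P k p‖⁻¹ + 1) ^ ℓ p) := by
        rw [Finset.univ_eq_attach]
        have hco : ∀ p ∈ P.attach, g p (k p)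
            = ‖G (kOf P k p.1)‖ ^ 2 * (‖kOf P k p.1‖⁻¹ + 1) ^ ℓ p.1 := by
          intro p _
          have hk' : kOf P k p.1 = k p := by simp only [kOf, dif_pos p.2]
          rw [hk']
        rw [Finset.prod_congr rfl hco]
        exact Finset.prod_attach P (fun q => ‖G (kOf P k q)‖ ^ 2 * (‖kOf P k q‖⁻¹ + 1) ^ ℓ q)
      rw [h8, Finset.prod_mul_distrib]
      ring
    rw [← hstep3]
    exact hstep2
  -- measurability of the integrand
  set F' : ℤ → ℝ → 𝓗 →L[ℂ] 𝓗 := fun j =>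
    Function.extend (Subtype.val : Set.Ioi (0:ℝ) → ℝ) (fun a => F j a) (fun _ => 0) with hF'
  have hF'sm : ∀ j ∈ X, j ≠ fmax X → StronglyMeasurable (F' j) := by
    intro j hj hjm
    exact (MeasurableEmbedding.subtype_coe measurableSet_Ioi).stronglyMeasurable_extend
      (hFmeas j hj hjm) stronglyMeasurable_const
  have hF'eq : ∀ j (t : ℝ), 0 < t → F' j t = F j t := by
    intro j t ht
    simpa using Subtype.val_injective.extend_apply
      (fun a : Set.Ioi (0:ℝ) => F j a) (fun _ => (0 : 𝓗 →L[ℂ] 𝓗)) ⟨t, ht⟩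
  set I' : (↥P → E3) → 𝓗 →L[ℂ] 𝓗 := fun k => ((X.sort (· ≤ ·)).map fun j =>
    Gsharp G P k j * (if j = fmax X then 1 else F' j (Ksum P k j (rX X j) + r))).prod with hI'
  have hsm' : StronglyMeasurable I' := by
    apply stronglyMeasurable_list_prod
    intro j hj
    have hjX : j ∈ X := (Finset.mem_sort (α := ℤ) (· ≤ ·)).1 hj
    apply (stronglyMeasurable_Gsharp G hGmeas P j).mul
    by_cases hjm : j = fmax X
    · simp only [if_pos hjm]
      exact stronglyMeasurable_const
    · simp only [if_neg hjm]
      exact (hF'sm j hjX hjm).comp_measurable ((measurable_Ksum P j (rX X j)).add_const r)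
  have haeeq : ∀ k : ↥P → E3, (∀ p : ↥P, k p ≠ 0) →
      contractionIntegrand G X P F r k = I' k := by
    intro k hk
    unfold contractionIntegrand
    rw [hI']
    congr 1
    apply List.map_congr_left
    intro j hj
    have hjX : j ∈ X := (Finset.mem_sort (α := ℤ) (· ≤ ·)).1 hj
    by_cases hjm : j = fmax X
    · simp only [if_pos hjm]
    · simp only [if_neg hjm]
      rw [hF'eq j _ (hKpos k hk j hjX hjm)]
  have hae0 := ae_ne_zero P
  have hAESM : AEStronglyMeasurable (contractionIntegrand G X P F r) volume := by
    apply hsm'.aestronglyMeasurable.congr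
    filter_upwards [hae0] with k hk
    exact (haeeq k hk).symm
  have hInt : Integrable (contractionIntegrand G X P F r) := by
    apply Integrable.mono' hMint hAESM
    filter_upwards [hae0] with k hk
    exact hbound k hk
  refine ⟨hInt, ?_⟩
  -- the integral bound
  have hnormle : ‖contraction G X P F r‖ ≤ ∫ k : ↥P → E3, M k := by
    apply norm_integral_le_of_norm_le hMint
    filter_upwards [hae0] with k hk
    exact hbound k hk
  have hMeval : ∫ k : ↥P → E3, M k = CF ^ (X.card - 1) * ∏ p : ↥P, ∫ v : E3, g p v := by
    simp only [hM]
    rw [integral_const_mul]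
    congr 1
    exact integral_fintype_prod_eq_prod (ι := ↥P) g
  set I₂ : ℝ := ∫ v : E3, (‖v‖⁻¹ + 1) ^ 2 * ‖G v‖ ^ 2 with hI₂
  set I₁ : ℝ := ∫ v : E3, (‖v‖⁻¹ + 1) * ‖G v‖ ^ 2 with hI₁
  have hI₂nn : 0 ≤ I₂ := integral_nonneg fun v => by positivity
  have hI₁nn : 0 ≤ I₁ := integral_nonneg fun v => by positivity
  obtain ⟨p₀, hp₀P, hp₀ℓ⟩ := hp₀
  set p₀' : ↥P := ⟨p₀, hp₀P⟩ with hp₀'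
  have hcardP : Fintype.card ↥P = P.card := Fintype.card_coe P
  have hprodle : ∏ p : ↥P, ∫ v : E3, g p v ≤ I₁ * I₂ ^ (P.card - 1) := by
    rw [← Finset.mul_prod_erase Finset.univ _ (Finset.mem_univ p₀')]
    apply mul_le_mul (hgI1 p₀' hp₀ℓ)
    · calc ∏ p ∈ Finset.univ.erase p₀', ∫ v : E3, g p v
          ≤ ∏ p ∈ Finset.univ.erase p₀', I₂ :=
            Finset.prod_le_prod (fun p _ => hgInn p) (fun p _ => hgI2 p)
        _ = I₂ ^ (P.card - 1) := by
            rw [Finset.prod_const, Finset.card_erase_of_mem (Finset.mem_univ _),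
              Finset.card_univ, hcardP]
    · exact Finset.prod_nonneg fun p _ => hgInn p
    · exact hI₁nn
  have hsqrt2 : Real.sqrt I₂ ^ (X.card - 2) = I₂ ^ (P.card - 1) := by
    have hexp : X.card - 2 = 2 * (P.card - 1) := by omega
    rw [hexp, pow_mul, Real.sq_sqrt hI₂nn]
  have hsqrt1 : Real.sqrt I₁ ^ 2 = I₁ := Real.sq_sqrt hI₁nn
  calc ‖contraction G X P F r‖ ≤ ∫ k : ↥P → E3, M k := hnormle
    _ = CF ^ (X.card - 1) * ∏ p : ↥P, ∫ v : E3, g p v := hMeval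
    _ ≤ CF ^ (X.card - 1) * (I₁ * I₂ ^ (P.card - 1)) := by
        apply mul_le_mul_of_nonneg_left hprodle (pow_nonneg hCF _)
    _ = CF ^ (X.card - 1) * Real.sqrt I₂ ^ (X.card - 2) * Real.sqrt I₁ ^ 2 := by
        rw [hsqrt2, hsqrt1]; ring
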